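/- arXiv:2507.22284 — 4 statements merged into one kernel-verified Lean document; each statement's English description precedes it below -/
import Mathlib

section
/- Let S be a k-dimensional simplex in R^d and let x, y be points such that the affine hull H of S ∪ {x,y} is (k+1)-dimensional and x, y lie in the same connected component of H minus the affine hull of S. Then the relative interiors of conv(S ∪ {x}) and conv(S ∪ {y}) intersect. -/
open RealInnerProductSpace

noncomputable section

abbrev Euc (d : ℕ) := EuclideanSpace ℝ (Fin d)

/-- A polytope is the convex hull of a finite set of points. -/
def IsPolytope {d : ℕ} (P : Set (Euc d)) : Prop :=
  ∃ V : Set (Euc d), V.Finite ∧ P = convexHull ℝ V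

/-- The dimension of a subset: the rank of its vector span (direction of its affine hull). -/
noncomputable def sdim {d : ℕ} (F : Set (Euc d)) : ℕ :=
  Module.finrank ℝ (vectorSpan ℝ F)

/-- A full flag of a `k`-dimensional polytope `P`: a chain of nonempty faces,
one in each dimension `0, …, k-1`.  For indices `≥ k` the face is `P` itself by convention. -/
structure FullFlag {d : ℕ} (P : Set (Euc d)) (k : ℕ) where
  face : ℕ → Set (Euc d)
  exposed : ∀ i < k, IsExposed ℝ P (face i)
  nonempty : ∀ i < k, (face i).Nonempty
  dim_eq : ∀ i < k, sdim (face i) = i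
  chain : ∀ i j : ℕ, i < j → j < k → face i ⊆ face j
  top : ∀ i, k ≤ i → face i = P

/-! Let `g` be an affine functional vanishing on `aff S` with `g y = 1`. Since `H` is spanned by
`S` and `y`, the zero set of `g` in `H` is exactly `aff S`, so `g` has constant sign on the
component of `H \ aff S` containing `x` and `y`: `g x > 0`. But `g x` is the barycentric
coordinate of `x` at the apex `y` of the simplex `conv (S ∪ {y})`, so pushing a relative interior
point of `S` slightly towards `x` keeps all barycentric coordinates positive in both simplices
`conv (S ∪ {x})` and `conv (S ∪ {y})`. -/

open Set Filter Topology

theorem AffineIndependent.sum_smul_mem_intrinsicInterior_convexHull {ι E : Type*} [Fintype ι]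
    [NormedAddCommGroup E] [NormedSpace ℝ E] {q : ι → E} (hq : AffineIndependent ℝ q)
    {w : ι → ℝ} (hw : ∀ i, 0 < w i) (hw1 : ∑ i, w i = 1) :
    ∑ i, w i • q i ∈ intrinsicInterior ℝ (convexHull ℝ (range q)) := by
  have : Nonempty ι := by
    by_contra h
    simp [not_nonempty_iff.mp h] at hw1
  let i₀ : ι := Classical.arbitrary ι
  let V := vectorSpan ℝ (range q)
  let φ : V →ᵃⁱ[ℝ] E :=
    (AffineIsometryEquiv.constVAdd ℝ E (q i₀)).toAffineIsometry.comp V.subtypeₗᵢ.toAffineIsometry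
  let q' : ι → V := fun i =>
    ⟨q i -ᵥ q i₀, vsub_mem_vectorSpan ℝ (mem_range_self i) (mem_range_self i₀)⟩
  have hφq : φ ∘ q' = q := funext fun i => add_sub_cancel (q i₀) (q i)
  have hq' : AffineIndependent ℝ q' := AffineIndependent.of_comp φ.toAffineMap (hφq ▸ hq)
  have htot : affineSpan ℝ (range q') = ⊤ := by
    have hcard : Fintype.card ι = Fintype.card ι - 1 + 1 :=
      (Nat.sub_add_cancel Fintype.card_pos).symm
    rwa [hq'.affineSpan_eq_top_iff_card_eq_finrank_add_one, hq.finrank_vectorSpan hcard]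
  let b : AffineBasis ι ℝ V := ⟨q', hq', htot⟩
  have hz : Finset.univ.affineCombination ℝ q' w ∈ interior (convexHull ℝ (range q')) := by
    rw [show range q' = range b from rfl, b.interior_convexHull]
    intro i
    convert hw i using 1
    exact b.coord_apply_combination_of_mem (Finset.mem_univ i) hw1
  have himg : φ '' convexHull ℝ (range q') = convexHull ℝ (range q) := by
    rw [← hφq, range_comp]
    exact φ.toAffineMap.image_convexHull _
  rw [← himg, AffineIsometry.intrinsicInterior_image]
  refine ⟨_, interior_subset_intrinsicInterior hz, ?_⟩
  rw [← Finset.univ.affineCombination_eq_linear_combination q w hw1, ← hφq]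
  exact Finset.univ.map_affineCombination q' w hw1 φ.toAffineMap

section Affine

variable {k V P : Type*} [Field k] [AddCommGroup V] [Module k V] [AddTorsor V P]

theorem AffineSubspace.exists_affineMap_eq_zero_of_notMem {s : AffineSubspace k P} {p₀ y : P}
    (hp₀ : p₀ ∈ s) (hy : y ∉ s) : ∃ g : P →ᵃ[k] k, (∀ z ∈ s, g z = 0) ∧ g y = 1 := by
  have hv : y -ᵥ p₀ ∉ s.direction :=
    (AffineSubspace.vsub_right_mem_direction_iff_mem hp₀ y).not.mpr hy
  obtain ⟨f, hf0, hfv⟩ := LinearMap.exists_extend_of_notMem (0 : s.direction →ₗ[k] k) hv 1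
  refine ⟨f.toAffineMap.comp (AffineEquiv.vaddConst k p₀).symm.toAffineMap, fun z hz => ?_, hfv⟩
  simpa using LinearMap.congr_fun hf0 ⟨z -ᵥ p₀, AffineSubspace.vsub_mem_direction hz hp₀⟩

theorem Fin.cons_image_compl_zero {α : Type*} {n : ℕ} (x : α) (p : Fin n → α) :
    (Fin.cons x p : Fin (n + 1) → α) '' {0}ᶜ = range p := by
  ext z
  simp [Fin.exists_fin_succ]

theorem AffineIndependent.cons {n : ℕ} {p : Fin n → P} (hp : AffineIndependent k p) {x : P}
    (hx : x ∉ affineSpan k (range p)) : AffineIndependent k (Fin.cons x p : Fin (n + 1) → P) := by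
  refine AffineIndependent.affineIndependent_of_notMem_span (i := 0) ?_ ?_
  · rw [← affineIndependent_equiv (finSuccAboveEquiv 0)]
    convert hp
    ext i
    simp [finSuccAboveEquiv_apply]
  · simpa [← compl_ofPred, Fin.cons_image_compl_zero] using hx

variable {n : ℕ} {p : Fin n → P} {y : P} {g : P →ᵃ[k] k}

theorem AffineMap.apply_affineCombination_cons (hp : ∀ i, g (p i) = 0) (hy : g y = 1)
    {c : Fin (n + 1) → k} (hc : ∑ i, c i = 1) :
    g (Finset.univ.affineCombination k (Fin.cons y p) c) = c 0 := by
  rw [Finset.univ.map_affineCombination _ _ hc,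
    Finset.univ.affineCombination_eq_linear_combination _ _ hc]
  simp [Fin.sum_univ_succ, hp, hy]

theorem mem_affineSpan_of_mem_affineSpan_cons_of_apply_eq_zero (hp : ∀ i, g (p i) = 0)
    (hy : g y = 1) {z : P} (hz : z ∈ affineSpan k (range (Fin.cons y p : Fin (n + 1) → P)))
    (hgz : g z = 0) : z ∈ affineSpan k (range p) := by
  obtain ⟨c, hc, rfl⟩ := eq_affineCombination_of_mem_affineSpan_of_fintype hz
  rw [g.apply_affineCombination_cons hp hy hc] at hgz
  rw [← Fin.cons_image_compl_zero y p]
  refine affineCombination_mem_affineSpan_image hc (fun i _ hi => ?_) _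
  rwa [notMem_compl_iff.mp hi]

end Affine

theorem IsPreconnected.pos_of_pos {X : Type*} [TopologicalSpace X] {s : Set X}
    (hs : IsPreconnected s) {f : X → ℝ} (hf : ContinuousOn f s) (hf0 : ∀ z ∈ s, f z ≠ 0)
    {a b : X} (ha : a ∈ s) (hb : b ∈ s) (hfa : 0 < f a) : 0 < f b := by
  by_contra! hfb
  obtain ⟨z, hz, hfz⟩ := hs.intermediate_value hb ha hf ⟨hfb, hfa.le⟩
  exact hf0 z hz hfz

theorem exists_mem_Ioo_forall_pos_add_mul {ι : Type*} [Finite ι] {a : ℝ} (ha : 0 < a)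
    (c : ι → ℝ) : ∃ t ∈ Ioo (0 : ℝ) 1, ∀ i, 0 < (1 - t) * a + t * c i := by
  have hpos_near : ∀ i, ∀ᶠ t in 𝓝 (0 : ℝ), 0 < (1 - t) * a + t * c i := fun i => by
    have : Continuous fun t : ℝ => (1 - t) * a + t * c i := by fun_prop
    exact continuousAt_const.eventually_lt this.continuousAt (by simpa using ha)
  have hlt_one : ∀ᶠ t in 𝓝 (0 : ℝ), t < 1 := eventually_lt_nhds one_pos
  obtain ⟨t, ⟨ht1, hti⟩, ht0⟩ :=
    ((hlt_one.and (eventually_all.mpr hpos_near)).filter_mono nhdsWithin_le_nhds |>.and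
      self_mem_nhdsWithin).exists (f := 𝓝[>] (0 : ℝ))
  exact ⟨t, ⟨ht0, ht1⟩, hti⟩

theorem exists_mem_intrinsicInterior_convexHull_insert_inter {E : Type*} [NormedAddCommGroup E]
    [NormedSpace ℝ E] {n : ℕ} {p : Fin (n + 1) → E} {x y : E}
    (hx : AffineIndependent ℝ (Fin.cons x p : Fin (n + 2) → E))
    (hy : AffineIndependent ℝ (Fin.cons y p : Fin (n + 2) → E))
    {c : Fin (n + 2) → ℝ} (hc : ∑ i, c i = 1) (hc0 : 0 < c 0)
    (hxc : x = ∑ i, c i • (Fin.cons y p : Fin (n + 2) → E) i) :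
    (intrinsicInterior ℝ (convexHull ℝ (insert x (range p))) ∩
      intrinsicInterior ℝ (convexHull ℝ (insert y (range p)))).Nonempty := by
  obtain ⟨t, ⟨ht0, ht1⟩, hpos⟩ := exists_mem_Ioo_forall_pos_add_mul
    (inv_pos.mpr (Nat.cast_add_one_pos n)) fun i : Fin (n + 1) => c i.succ
  set a := (1 - t) * ((n : ℝ) + 1)⁻¹
  have ha : 0 < a := mul_pos (sub_pos.mpr ht1) (inv_pos.mpr (Nat.cast_add_one_pos n))
  have hsum_a : ∑ _i : Fin (n + 1), a = 1 - t := by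
    simp only [Finset.sum_const, Finset.card_univ, Fintype.card_fin, nsmul_eq_mul, a]
    push_cast
    field_simp
  let wx : Fin (n + 2) → ℝ := Fin.cons t fun _ => a
  let wy : Fin (n + 2) → ℝ := Fin.cons (t * c 0) fun i => a + t * c i.succ
  have hzx : ∑ i, wx i • (Fin.cons x p : Fin (n + 2) → E) i = t • x + ∑ i, a • p i := by
    simp [wx, Fin.sum_univ_succ]
  have hzy : ∑ i, wy i • (Fin.cons y p : Fin (n + 2) → E) i = t • x + ∑ i, a • p i := by
    rw [hxc]
    simp [wy, Fin.sum_univ_succ, add_smul, mul_smul, Finset.sum_add_distrib, Finset.smul_sum]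
    abel
  refine ⟨t • x + ∑ i, a • p i, ?_, ?_⟩
  · rw [← Fin.range_cons, ← hzx]
    refine hx.sum_smul_mem_intrinsicInterior_convexHull (fun i => ?_) ?_
    · cases i using Fin.cases <;> simp [wx, ht0, ha]
    · simp [wx, Fin.sum_univ_succ, hsum_a]
  · rw [← Fin.range_cons, ← hzy]
    refine hy.sum_smul_mem_intrinsicInterior_convexHull (fun i => ?_) ?_
    · cases i using Fin.cases
      · exact mul_pos ht0 hc0
      · simpa [wy, mul_comm] using hpos _
    · rw [Fin.sum_univ_succ] at hc ⊢
      simp only [wy, Fin.cons_zero, Fin.cons_succ, Finset.sum_add_distrib, hsum_a,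
        ← Finset.mul_sum]
      linear_combination t * hc

/-- If `S` is a `k`-dimensional simplex and `x, y` are points such that the affine hull `H` of
`S ∪ {x,y}` is `(k+1)`-dimensional and `x, y` lie in the same connected component of
`H \ aff S`, then the relative interiors of `conv (S ∪ {x})` and `conv (S ∪ {y})` intersect. -/
theorem stmt_0 {d k : ℕ} (p : Fin (k + 1) → Euc d) (hp : AffineIndependent ℝ p)
    (S : Set (Euc d)) (hS : S = convexHull ℝ (Set.range p))
    (x y : Euc d)
    (hdim : Module.finrank ℝ (vectorSpan ℝ (S ∪ {x, y})) = k + 1)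
    (hconn : y ∈ connectedComponentIn
      ((affineSpan ℝ (S ∪ {x, y}) : Set (Euc d)) \ (affineSpan ℝ S : Set (Euc d))) x) :
    (intrinsicInterior ℝ (convexHull ℝ (S ∪ {x})) ∩
      intrinsicInterior ℝ (convexHull ℝ (S ∪ {y}))).Nonempty := by
  subst hS
  rw [affineSpan_convexHull] at hconn
  set F := (affineSpan ℝ (convexHull ℝ (range p) ∪ {x, y}) : Set (Euc d)) \
    (affineSpan ℝ (range p) : Set (Euc d))
  have hxF : x ∈ F := connectedComponentIn_nonempty_iff.mp ⟨y, hconn⟩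
  have hyF : y ∈ F := connectedComponentIn_subset _ _ hconn
  have hH : affineSpan ℝ (range (Fin.cons y p : Fin (k + 2) → Euc d)) =
      affineSpan ℝ (convexHull ℝ (range p) ∪ {x, y}) := by
    refine (hp.cons hyF.2).affineSpan_eq_of_le_of_card_eq_finrank_add_one
      (affineSpan_mono ℝ ?_) (by rw [direction_affineSpan, hdim, Fintype.card_fin])
    rw [Fin.range_cons, insert_subset_iff]
    exact ⟨by simp, (subset_convexHull ℝ _).trans subset_union_left⟩
  obtain ⟨g, hg0, hgy⟩ := AffineSubspace.exists_affineMap_eq_zero_of_notMem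
    (mem_affineSpan ℝ (mem_range_self 0)) hyF.2
  have hgp : ∀ i, g (p i) = 0 := fun i => hg0 _ (mem_affineSpan ℝ (mem_range_self i))
  have hgF : ∀ z ∈ F, g z ≠ 0 := fun z hz hgz =>
    hz.2 (mem_affineSpan_of_mem_affineSpan_cons_of_apply_eq_zero hgp hgy (hH ▸ hz.1) hgz)
  have hgx : 0 < g x := isPreconnected_connectedComponentIn.pos_of_pos
    g.continuous_of_finiteDimensional.continuousOn
    (fun z hz => hgF z (connectedComponentIn_subset _ _ hz)) hconn (mem_connectedComponentIn hxF)
    (hgy ▸ one_pos)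
  obtain ⟨c, hc, hxc⟩ := eq_affineCombination_of_mem_affineSpan_of_fintype (hH ▸ hxF.1)
  rw [hxc, g.apply_affineCombination_cons hgp hgy hc] at hgx
  rw [convexHull_convexHull_union_left, convexHull_convexHull_union_left, union_singleton,
    union_singleton]
  exact exists_mem_intrinsicInterior_convexHull_insert_inter (hp.cons hxF.2) (hp.cons hyF.2) hc
    hgx (by rw [hxc, Finset.univ.affineCombination_eq_linear_combination _ _ hc])
end
end

section
/- Let P be a d-dimensional polytope, F a full flag of P, and i ≤ j indices in [0, d−1]. If F^j denotes the flag obtained from F by applying the flips r_i, r_{i+1}, ..., r_j in order, then F_i is not contained in the j-dimensional face of F^j. -/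
open RealInnerProductSpace

noncomputable section

/-!
Write `F^k` for the `k`-th flag of the ladder. Above index `k` it still agrees with `F`, so
`F_i ⊆ F^k_k` would put `F_i` into `F^{k-1}_k ∩ F^k_k`, which by the diamond property is
`F^{k-1}_{k-1}`. Descending the ladder ends in `F_i ⊆ (r_i F)_i`, impossible for two distinct
exposed faces of the same dimension.
-/

theorem vectorSpan_le_ker_of_forall_eq {R E : Type*} [Ring R] [AddCommGroup E] [Module R E]
    {A : Set E} {l : E →ₗ[R] R} (hl : ∀ x ∈ A, ∀ y ∈ A, l x = l y) :
    vectorSpan R A ≤ LinearMap.ker l := by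
  refine Submodule.span_le.2 ?_
  rintro _ ⟨x, hx, y, hy, rfl⟩
  simp [vsub_eq_sub, hl x hx y hy]

section ExposedFaces

variable {𝕜 E : Type*} [Field 𝕜] [LinearOrder 𝕜] [TopologicalSpace 𝕜]
  [AddCommGroup E] [TopologicalSpace E] [Module 𝕜 E] {P A B : Set E}

/-- The exposing functional is constant on the affine span of the face. -/
theorem IsExposed.eq_of_subset_of_finrank_le [FiniteDimensional 𝕜 E] (hA : IsExposed 𝕜 P A)
    (hAne : A.Nonempty) (hAB : A ⊆ B) (hBP : B ⊆ P)
    (hdim : Module.finrank 𝕜 (vectorSpan 𝕜 B) ≤ Module.finrank 𝕜 (vectorSpan 𝕜 A)) :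
    B = A := by
  obtain ⟨l, rfl⟩ := hA hAne
  obtain ⟨a, ha⟩ := hAne
  have hspan : vectorSpan 𝕜 _ = vectorSpan 𝕜 B :=
    Submodule.eq_of_le_of_finrank_le (vectorSpan_mono 𝕜 hAB) hdim
  have hker := vectorSpan_le_ker_of_forall_eq (A := {x ∈ P | ∀ y ∈ P, l y ≤ l x})
    (l := (l : E →ₗ[𝕜] 𝕜)) fun x hx y hy => le_antisymm (hy.2 x hx.1) (hx.2 y hy.1)
  refine Set.Subset.antisymm (fun b hb => ⟨hBP hb, fun y hy => ?_⟩) hAB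
  have hlba : l (b - a) = 0 := hker (hspan ▸ vsub_mem_vectorSpan 𝕜 hb (hAB ha))
  rw [map_sub, sub_eq_zero] at hlba
  exact hlba ▸ ha.2 y hy

end ExposedFaces

namespace FullFlag

variable {d n : ℕ} {P : Set (Euc d)}

/-- `G` is the flip `r_k F`: it differs from `F` exactly in its `k`-th face. -/
def IsFlip (F G : FullFlag P n) (k : ℕ) : Prop :=
  G.face k ≠ F.face k ∧ ∀ m, m ≠ k → G.face m = F.face m

theorem face_eq_of_face_subset (F G : FullFlag P n) {k : ℕ} (hk : k < n)
    (h : F.face k ⊆ G.face k) : G.face k = F.face k :=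
  (F.exposed k hk).eq_of_subset_of_finrank_le (F.nonempty k hk) h (G.exposed k hk).subset
    ((G.dim_eq k hk).trans (F.dim_eq k hk).symm).le

theorem IsFlip.not_face_subset {F G : FullFlag P n} {k : ℕ} (h : IsFlip F G k) (hk : k < n) :
    ¬ F.face k ⊆ G.face k :=
  fun hsub => h.1 (face_eq_of_face_subset F G hk hsub)

/-- The diamond property: `F_{k+1} ∩ G_{k+1}` is an exposed face containing `F_k = G_k`, so by
dimension it is `F_k` or `F_{k+1}`, and the latter would force `F_{k+1} ⊆ G_{k+1}`. -/
theorem IsFlip.face_succ_inter_eq {F G : FullFlag P n} {k : ℕ} (h : IsFlip F G (k + 1))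
    (hk : k + 1 < n) : F.face (k + 1) ∩ G.face (k + 1) = F.face k := by
  have hkn : k < n := k.lt_succ_self.trans hk
  have hexp : IsExposed ℝ P (F.face (k + 1) ∩ G.face (k + 1)) :=
    (F.exposed _ hk).inter (G.exposed _ hk)
  have hsub : F.face k ⊆ F.face (k + 1) ∩ G.face (k + 1) :=
    Set.subset_inter (F.chain k _ k.lt_succ_self hk)
      (h.2 k k.succ_ne_self.symm ▸ G.chain k _ k.lt_succ_self hk)
  by_cases hdim : sdim (F.face (k + 1) ∩ G.face (k + 1)) ≤ k
  · exact (F.exposed k hkn).eq_of_subset_of_finrank_le (F.nonempty k hkn) hsub hexp.subset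
      (hdim.trans_eq (F.dim_eq k hkn).symm)
  · have hF : F.face (k + 1) = F.face (k + 1) ∩ G.face (k + 1) :=
      hexp.eq_of_subset_of_finrank_le ((F.nonempty k hkn).mono hsub) Set.inter_subset_left
        (F.exposed _ hk).subset ((F.dim_eq _ hk).trans_le (not_le.1 hdim))
    exact absurd (hF ▸ Set.inter_subset_right) (h.not_face_subset hk)

section Ladder

variable (F : FullFlag P n) (G : ℕ → FullFlag P n) {i : ℕ}

theorem face_eq_of_isFlip_ladder (hGi : IsFlip F (G i) i)
    {j : ℕ} (hij : i ≤ j) (hG : ∀ k, i ≤ k → k < j → IsFlip (G k) (G (k + 1)) (k + 1))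
    {m : ℕ} (hjm : j < m) : (G j).face m = F.face m := by
  induction j, hij using Nat.le_induction generalizing m with
  | base => exact hGi.2 m hjm.ne'
  | succ k hik ih =>
    rw [(hG k hik k.lt_succ_self).2 m hjm.ne']
    exact ih (fun l hil hlk => hG l hil (hlk.trans k.lt_succ_self)) (k.lt_succ_self.trans hjm)

theorem not_face_subset_of_isFlip_ladder (hGi : IsFlip F (G i) i)
    {j : ℕ} (hij : i ≤ j) (hjn : j < n)
    (hG : ∀ k, i ≤ k → k < j → IsFlip (G k) (G (k + 1)) (k + 1)) :
    ¬ F.face i ⊆ (G j).face j := by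
  induction j, hij using Nat.le_induction with
  | base => exact hGi.not_face_subset hjn
  | succ k hik ih =>
    intro hsub
    have hG' : ∀ l, i ≤ l → l < k → IsFlip (G l) (G (l + 1)) (l + 1) :=
      fun l hil hlk => hG l hil (hlk.trans k.lt_succ_self)
    have hFG : F.face i ⊆ (G k).face (k + 1) :=
      face_eq_of_isFlip_ladder F G hGi hik hG' k.lt_succ_self ▸
        F.chain i (k + 1) (Nat.lt_succ_of_le hik) hjn
    refine ih (k.lt_succ_self.trans hjn) hG' ?_
    exact (hG k hik k.lt_succ_self).face_succ_inter_eq hjn ▸ Set.subset_inter hFG hsub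

end Ladder

end FullFlag

theorem stmt_6_general {d : ℕ} (P : Set (Euc d))
    (F : FullFlag P d) (i j : ℕ) (hij : i ≤ j) (hj : j < d)
    (G : ℕ → FullFlag P d)
    (hGi : (G i).face i ≠ F.face i ∧ ∀ m, m ≠ i → (G i).face m = F.face m)
    (hGk : ∀ k, i < k → k ≤ j →
      (G k).face k ≠ (G (k - 1)).face k ∧ ∀ m, m ≠ k → (G k).face m = (G (k - 1)).face m) :
    ¬ F.face i ⊆ (G j).face j :=
  F.not_face_subset_of_isFlip_ladder G hGi hij hj fun k hik hkj =>
    hGk (k + 1) (Nat.lt_succ_of_le hik) hkj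

/-- Ladder claim: if `F^i = r_i F` and `F^k = r_k F^{k-1}` for `i < k ≤ j` (each flag
differing from the previous one exactly in its `k`-th face), then `F_i ⊄ (F^j)_j`. -/
theorem stmt_6 {d : ℕ} (P : Set (Euc d)) (hP : IsPolytope P) (hPd : sdim P = d)
    (F : FullFlag P d) (i j : ℕ) (hij : i ≤ j) (hj : j < d)
    (G : ℕ → FullFlag P d)
    (hGi : (G i).face i ≠ F.face i ∧ ∀ m, m ≠ i → (G i).face m = F.face m)
    (hGk : ∀ k, i < k → k ≤ j →
      (G k).face k ≠ (G (k - 1)).face k ∧ ∀ m, m ≠ k → (G k).face m = (G (k - 1)).face m) :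
    ¬ F.face i ⊆ (G j).face j :=
  stmt_6_general P F i j hij hj G hGi hGk
end
end

section
/- Let Φ be a fan in R^d, P a k-dimensional polytope, and F a full flag of P. Then the set of cones C ∈ Φ such that C intersects the relative interior of F_i for every i ∈ [0,k] is closed under pairwise intersection: if C and D both have this property, so does C ∩ D. -/
open RealInnerProductSpace

noncomputable section

/-- A polyhedral cone: the positive span of finitely many vectors. -/
def IsPolyCone {d : ℕ} (C : Set (Euc d)) : Prop :=
  ∃ (n : ℕ) (v : Fin n → Euc d),
    C = {x | ∃ c : Fin n → ℝ, (∀ i, 0 ≤ c i) ∧ x = ∑ i, c i • v i}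

/-- `F` is a face of the cone `C`. -/
def IsConeFace {d : ℕ} (C F : Set (Euc d)) : Prop :=
  ∃ ν : Euc d, (∀ x ∈ C, ⟪ν, x⟫ ≤ 0) ∧ F = {x ∈ C | ⟪ν, x⟫ = 0}

/-- A (complete) fan in `ℝ^d`: a finite family of polyhedral cones covering `ℝ^d` such that
the intersection of any two members is a face of each and is a member of the family. -/
def IsFan {d : ℕ} (Φ : Finset (Set (Euc d))) : Prop :=
  (∀ C ∈ Φ, IsPolyCone C) ∧
  (⋃₀ (↑Φ : Set (Set (Euc d))) = Set.univ) ∧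
  (∀ C ∈ Φ, ∀ D ∈ Φ, IsConeFace C (C ∩ D) ∧ IsConeFace D (C ∩ D) ∧ (C ∩ D) ∈ Φ)

/-!
By induction on `i` one proves more: `C ∩ D` contains a neighbourhood, relative to `aff Fᵢ`, of
a point `p` in the relative interior of `Fᵢ`. For `i = 0` the face is a point. For the step, let
`ℓ` expose `Fᵢ` in `P`; then `ℓ < ℓ p` on the relative interior of `Fᵢ₊₁`, and since `Fᵢ` has
codimension one in `Fᵢ₊₁`, `aff Fᵢ` is the slice `ℓ = ℓ p` of `aff Fᵢ₊₁`. Hence a convex set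
containing a relative neighbourhood of `p` in `aff Fᵢ` and a point `x` of `aff Fᵢ₊₁` with
`ℓ x < ℓ p` contains every point of `aff Fᵢ₊₁` near `p` with `ℓ < ℓ p`: such a point lies on a
segment from `x` to the slice near `p`. This applies to `C` and to `D` alike, and the segment from
`p` into the relative interior of `Fᵢ₊₁` enters this half-neighbourhood.
-/

open Set Filter Topology

theorem mem_intrinsicInterior_iff_mem_nhdsWithin {𝕜 V P : Type*} [Ring 𝕜] [AddCommGroup V]
    [Module 𝕜 V] [TopologicalSpace P] [AddTorsor V P] {s : Set P} {x : P} :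
    x ∈ intrinsicInterior 𝕜 s ↔ x ∈ affineSpan 𝕜 s ∧ s ∈ 𝓝[affineSpan 𝕜 s] x := by
  constructor
  · rintro ⟨y, hy, rfl⟩
    exact ⟨y.2, preimage_coe_mem_nhds_subtype.1 (mem_interior_iff_mem_nhds.1 hy)⟩
  · rintro ⟨hx, hs⟩
    exact ⟨⟨x, hx⟩, mem_interior_iff_mem_nhds.2 (preimage_coe_mem_nhds_subtype.2 hs), rfl⟩

theorem Submodule.inf_ker_eq_of_finrank_eq_succ {K V : Type*} [Field K] [AddCommGroup V]
    [Module K V] {W U : Submodule K V} [FiniteDimensional K U] {f : V →ₗ[K] K}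
    (hWU : W ≤ U) (hW : W ≤ LinearMap.ker f) (hU : ¬ U ≤ LinearMap.ker f)
    (hdim : Module.finrank K U = Module.finrank K W + 1) :
    U ⊓ LinearMap.ker f = W := by
  have hlt : U ⊓ LinearMap.ker f < U := inf_le_left.lt_of_ne fun h => hU (h ▸ inf_le_right)
  have := Submodule.finrank_lt_finrank_of_lt hlt
  exact (Submodule.eq_of_le_of_finrank_le (le_inf hWU hW) (by omega)).symm

section

variable {E : Type*} [NormedAddCommGroup E] [NormedSpace ℝ E]

theorem AffineSubspace.tendsto_lineMap_nhdsWithin {A : AffineSubspace ℝ E} {p x : E}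
    (hp : p ∈ A) (hx : x ∈ A) : Tendsto (AffineMap.lineMap p x : ℝ → E) (𝓝 0) (𝓝[A] p) :=
  tendsto_nhdsWithin_iff.2
    ⟨by simpa using (AffineMap.lineMap_continuous (R := ℝ) (p := p) (q := x)).tendsto 0,
      Eventually.of_forall fun t => AffineMap.lineMap_mem t hp hx⟩

theorem Convex.lineMap_mem_intrinsicInterior {s : Set E} (hs : Convex ℝ s) {p x : E}
    (hp : p ∈ s) (hx : x ∈ intrinsicInterior ℝ s) {μ : ℝ} (hμ₀ : 0 < μ) (hμ₁ : μ ≤ 1) :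
    AffineMap.lineMap p x μ ∈ intrinsicInterior ℝ s := by
  obtain ⟨hxA, hsx⟩ := mem_intrinsicInterior_iff_mem_nhdsWithin.1 hx
  set q := AffineMap.lineMap p x μ
  have hqA : q ∈ affineSpan ℝ s := AffineMap.lineMap_mem μ (subset_affineSpan ℝ s hp) hxA
  refine mem_intrinsicInterior_iff_mem_nhdsWithin.2 ⟨hqA, ?_⟩
  -- the homothety centred at `p` with ratio `μ⁻¹` maps `q` to `x`
  let h : E → E := fun r => x + μ⁻¹ • (r - q)
  have hh : Tendsto h (𝓝[affineSpan ℝ s] q) (𝓝[affineSpan ℝ s] x) := by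
    refine tendsto_nhdsWithin_iff.2 ⟨?_, eventually_nhdsWithin_of_forall fun r hr => ?_⟩
    · refine tendsto_nhdsWithin_of_tendsto_nhds ?_
      have : Continuous h := by fun_prop
      simpa [h] using this.tendsto q
    · change x + _ ∈ _
      rw [add_comm]
      exact AffineSubspace.vadd_mem_of_mem_direction
        (Submodule.smul_mem _ _ (AffineSubspace.vsub_mem_direction hr hqA)) hxA
  filter_upwards [hh.eventually_mem hsx] with r hr
  have : r = AffineMap.lineMap p (h r) μ := by
    simp only [h, q, AffineMap.lineMap_apply_module]
    rw [smul_add, smul_smul, mul_inv_cancel₀ hμ₀.ne', one_smul]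
    abel
  exact this ▸ hs.lineMap_mem hp hr ⟨hμ₀.le, hμ₁⟩

theorem IsMaxOn.eq_of_mem_intrinsicInterior {s : Set E} {x y : E} {ℓ : E →L[ℝ] ℝ}
    (hmax : IsMaxOn ℓ s x) (hx : x ∈ intrinsicInterior ℝ s) (hy : y ∈ s) : ℓ y = ℓ x := by
  obtain ⟨hxA, hsx⟩ := mem_intrinsicInterior_iff_mem_nhdsWithin.1 hx
  have hc := (AffineSubspace.tendsto_lineMap_nhdsWithin hxA (subset_affineSpan ℝ s hy)).mono_left
    (nhdsWithin_le_nhds (s := Iio 0))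
  obtain ⟨t, hts, ht⟩ := ((hc.eventually_mem hsx).and self_mem_nhdsWithin).exists
  have hle : ℓ (AffineMap.lineMap x y t) ≤ ℓ x := hmax hts
  rw [AffineMap.lineMap_apply_module, map_add, map_smul, map_smul, smul_eq_mul,
    smul_eq_mul] at hle
  have : ℓ y ≤ ℓ x := hmax hy
  nlinarith [show t < 0 from ht]

theorem Convex.eventually_nhdsWithin_mem_of_apply_lt {S : Set E} (hS : Convex ℝ S)
    {H A : AffineSubspace ℝ E} {ℓ : E →L[ℝ] ℝ}
    (hker : A.direction ⊓ LinearMap.ker (ℓ : E →ₗ[ℝ] ℝ) ≤ H.direction) {p x : E}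
    (hpH : p ∈ H) (hpA : p ∈ A) (hp : S ∈ 𝓝[H] p) (hxS : x ∈ S) (hxA : x ∈ A) (hℓx : ℓ x < ℓ p) :
    ∀ᶠ r in 𝓝[A] p, ℓ r < ℓ p → r ∈ S := by
  -- write `r = lineMap (g r) x (t r)` with `g r ∈ H`, which tends to `p` as `r` does
  let t : E → ℝ := fun r => (ℓ r - ℓ p) / (ℓ x - ℓ p)
  let g : E → E := fun r => p + (1 - t r)⁻¹ • (r - p - t r • (x - p))
  have ht : Continuous t := by fun_prop
  have htp : t p = 0 := by simp [t]
  have hg : Tendsto g (𝓝 p) (𝓝 p) := by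
    have : ContinuousAt g p := by
      refine continuousAt_const.add ((continuousAt_const.sub ht.continuousAt).inv₀ ?_ |>.smul ?_)
      · simp [htp]
      · fun_prop
    simpa [g, htp] using this.tendsto
  have hgS : ∀ᶠ r in 𝓝 p, g r ∈ H → g r ∈ S := hg.eventually (mem_nhdsWithin_iff_eventually.1 hp)
  have ht1 : ∀ᶠ r in 𝓝 p, t r < 1 := ht.continuousAt.eventually (gt_mem_nhds (by simp [htp]))
  rw [eventually_nhdsWithin_iff]
  filter_upwards [hgS, ht1] with r hgS ht1 hrA hℓr
  have ht0 : 0 < t r := div_pos_of_neg_of_neg (by linarith) (by linarith)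
  have hgH : g r ∈ H := by
    have hw : r - p - t r • (x - p) ∈ H.direction := by
      refine hker ⟨sub_mem (AffineSubspace.vsub_mem_direction hrA hpA)
        (Submodule.smul_mem _ _ (AffineSubspace.vsub_mem_direction hxA hpA)), ?_⟩
      have : ℓ x - ℓ p ≠ 0 := by linarith
      simp only [SetLike.mem_coe, LinearMap.mem_ker, ContinuousLinearMap.coe_coe, map_sub,
        map_smul, smul_eq_mul, t]
      field_simp
      ring
    change p + _ ∈ H
    rw [add_comm]
    exact AffineSubspace.vadd_mem_of_mem_direction (Submodule.smul_mem _ _ hw) hpH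
  have hr : r = AffineMap.lineMap (g r) x (t r) := by
    have : 1 - t r ≠ 0 := by linarith
    simp only [g, AffineMap.lineMap_apply_module, smul_add, smul_smul, mul_inv_cancel₀ this,
      one_smul]
    module
  exact hr ▸ hS.lineMap_mem (hgS hgH) hxS ⟨ht0.le, ht1.le⟩

theorem apply_lt_of_mem_intrinsicInterior {P G F : Set E} {ℓ : E →L[ℝ] ℝ}
    (hG : G = {x ∈ P | ∀ y ∈ P, ℓ y ≤ ℓ x}) (hFP : F ⊆ P) (hFG : ¬ F ⊆ G) {p x : E}
    (hp : p ∈ G) (hx : x ∈ intrinsicInterior ℝ F) : ℓ x < ℓ p := by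
  rw [hG] at hp hFG
  refine (hp.2 x (hFP (intrinsicInterior_subset hx))).lt_of_ne fun hxp => hFG fun y hy => ?_
  have hmax : IsMaxOn ℓ F x := fun z hz => hxp ▸ hp.2 z (hFP hz)
  exact ⟨hFP hy, (hmax.eq_of_mem_intrinsicInterior hx hy).trans hxp ▸ hp.2⟩

variable [FiniteDimensional ℝ E]

theorem exists_mem_intrinsicInterior_inter_mem_nhdsWithin_of_finrank_eq_zero {F C D : Set E}
    (hF : Module.finrank ℝ (vectorSpan ℝ F) = 0) (hCF : (C ∩ intrinsicInterior ℝ F).Nonempty)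
    (hDF : (D ∩ intrinsicInterior ℝ F).Nonempty) :
    ∃ p ∈ intrinsicInterior ℝ F, C ∩ D ∈ 𝓝[affineSpan ℝ F] p := by
  obtain ⟨z, hzC, hzF⟩ := hCF
  obtain ⟨z', hz'D, hz'F⟩ := hDF
  have hsub : F.Subsingleton :=
    (vectorSpan_eq_bot_iff_subsingleton ℝ).1 (Submodule.finrank_eq_zero.1 hF)
  obtain rfl : z' = z := hsub (intrinsicInterior_subset hz'F) (intrinsicInterior_subset hzF)
  refine ⟨z', hzF, ?_⟩
  rw [hsub.eq_singleton_of_mem (intrinsicInterior_subset hzF),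
    AffineSubspace.coe_affineSpan_singleton, nhdsWithin_singleton]
  exact ⟨hzC, hz'D⟩

theorem vectorSpan_inf_ker_eq_of_finrank_eq_succ {G F : Set E} {ℓ : E →L[ℝ] ℝ} (hGF : G ⊆ F)
    (hdim : Module.finrank ℝ (vectorSpan ℝ F) = Module.finrank ℝ (vectorSpan ℝ G) + 1)
    {p x : E} (hp : p ∈ G) (hG : ∀ z ∈ G, ℓ z = ℓ p) (hx : x ∈ F) (hxp : ℓ x ≠ ℓ p) :
    vectorSpan ℝ F ⊓ LinearMap.ker (ℓ : E →ₗ[ℝ] ℝ) = vectorSpan ℝ G := by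
  refine Submodule.inf_ker_eq_of_finrank_eq_succ (vectorSpan_mono ℝ hGF) ?_ ?_ hdim
  · rw [vectorSpan_def, Submodule.span_le]
    rintro _ ⟨a, ha, b, hb, rfl⟩
    simp [hG a ha, hG b hb]
  · intro h
    have := h (vsub_mem_vectorSpan ℝ hx (hGF hp))
    simp only [vsub_eq_sub, LinearMap.mem_ker, ContinuousLinearMap.coe_coe,
      map_sub, sub_eq_zero] at this
    exact hxp this

theorem exists_mem_intrinsicInterior_inter_mem_nhdsWithin_of_isExposed
    {P G F C D : Set E} (hC : Convex ℝ C) (hD : Convex ℝ D) (hF : Convex ℝ F)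
    (hG : IsExposed ℝ P G) (hGF : G ⊆ F) (hFP : F ⊆ P)
    (hdim : Module.finrank ℝ (vectorSpan ℝ F) = Module.finrank ℝ (vectorSpan ℝ G) + 1)
    (hCF : (C ∩ intrinsicInterior ℝ F).Nonempty) (hDF : (D ∩ intrinsicInterior ℝ F).Nonempty)
    (hCDG : ∃ p ∈ intrinsicInterior ℝ G, C ∩ D ∈ 𝓝[affineSpan ℝ G] p) :
    ∃ q ∈ intrinsicInterior ℝ F, C ∩ D ∈ 𝓝[affineSpan ℝ F] q := by
  obtain ⟨p, hpG, hp⟩ := hCDG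
  obtain ⟨x, hxC, hxF⟩ := hCF
  obtain ⟨y, hyD, hyF⟩ := hDF
  replace hpG := intrinsicInterior_subset hpG
  have hxA := subset_affineSpan ℝ F (intrinsicInterior_subset hxF)
  have hpF : p ∈ affineSpan ℝ F := subset_affineSpan ℝ F (hGF hpG)
  obtain ⟨ℓ, hℓ⟩ := hG ⟨p, hpG⟩
  have hFG : ¬ F ⊆ G := fun h => by
    have := Submodule.finrank_mono (vectorSpan_mono ℝ h)
    omega
  have hℓx := apply_lt_of_mem_intrinsicInterior hℓ hFP hFG hpG hxF
  have hℓy := apply_lt_of_mem_intrinsicInterior hℓ hFP hFG hpG hyF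
  have hℓG : ∀ z ∈ G, ℓ z = ℓ p := by
    rw [hℓ] at hpG ⊢
    exact fun z hz => le_antisymm (hpG.2 z hz.1) (hz.2 p hpG.1)
  have hker : (affineSpan ℝ F).direction ⊓ LinearMap.ker (ℓ : E →ₗ[ℝ] ℝ) ≤
      (affineSpan ℝ G).direction := by
    rw [direction_affineSpan, direction_affineSpan,
      vectorSpan_inf_ker_eq_of_finrank_eq_succ hGF hdim hpG hℓG (intrinsicInterior_subset hxF)
        hℓx.ne]
  have hnear : ∀ᶠ r in 𝓝[affineSpan ℝ F] p, ℓ r < ℓ p → r ∈ C ∩ D := by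
    have hyA := subset_affineSpan ℝ F (intrinsicInterior_subset hyF)
    have hpG' := subset_affineSpan ℝ G hpG
    filter_upwards [hC.eventually_nhdsWithin_mem_of_apply_lt hker hpG' hpF
        (mem_of_superset hp inter_subset_left) hxC hxA hℓx,
      hD.eventually_nhdsWithin_mem_of_apply_lt hker hpG' hpF
        (mem_of_superset hp inter_subset_right) hyD hyA hℓy] with r hrC hrD hr
    exact ⟨hrC hr, hrD hr⟩
  have hseg := (AffineSubspace.tendsto_lineMap_nhdsWithin hpF hxA).mono_left
    (nhdsWithin_le_nhds (s := Ioi 0))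
  obtain ⟨μ, hμ, hμ₀, hμ₁⟩ := ((hseg.eventually (eventually_eventually_nhdsWithin.2 hnear)).and
    (Ioo_mem_nhdsGT one_pos)).exists
  refine ⟨_, hF.lineMap_mem_intrinsicInterior (hGF hpG) hxF hμ₀ hμ₁.le, ?_⟩
  have hℓq : ℓ (AffineMap.lineMap p x μ) < ℓ p := by
    rw [AffineMap.lineMap_apply_module, map_add, map_smul, map_smul, smul_eq_mul, smul_eq_mul]
    nlinarith
  filter_upwards [hμ, nhdsWithin_le_nhds (ℓ.continuous.continuousAt.eventually
    (gt_mem_nhds hℓq))] with r h1 h2 using h1 h2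

end

theorem IsPolyCone.convex {d : ℕ} {C : Set (Euc d)} (h : IsPolyCone C) : Convex ℝ C := by
  obtain ⟨n, v, rfl⟩ := h
  have : {x | ∃ c : Fin n → ℝ, (∀ i, 0 ≤ c i) ∧ x = ∑ i, c i • v i} =
      Fintype.linearCombination ℝ v '' Ici 0 := by
    ext x
    simp [Fintype.linearCombination_apply, eq_comm, Pi.le_def]
  exact this ▸ (convex_Ici 0).linear_image _

theorem IsPolytope.convex {d : ℕ} {P : Set (Euc d)} (h : IsPolytope P) : Convex ℝ P := by
  obtain ⟨V, -, rfl⟩ := h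
  exact convex_convexHull ℝ V

namespace FullFlag

variable {d k : ℕ} {P : Set (Euc d)} (F : FullFlag P k)

theorem face_subset (i : ℕ) : F.face i ⊆ P := by
  rcases lt_or_ge i k with hi | hi
  · exact (F.exposed i hi).subset
  · exact (F.top i hi).subset

theorem convex_face (hP : Convex ℝ P) (i : ℕ) : Convex ℝ (F.face i) := by
  rcases lt_or_ge i k with hi | hi
  · exact (F.exposed i hi).convex hP
  · rw [F.top i hi]
    exact hP

theorem sdim_face (hPd : sdim P = k) {i : ℕ} (hi : i ≤ k) : sdim (F.face i) = i := by
  rcases hi.lt_or_eq with hi | rfl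
  · exact F.dim_eq i hi
  · rw [F.top i le_rfl, hPd]

theorem face_subset_face_succ {i : ℕ} (hi : i < k) : F.face i ⊆ F.face (i + 1) := by
  rcases (Nat.succ_le_of_lt hi).lt_or_eq with h | h
  · exact F.chain i (i + 1) i.lt_succ_self h
  · rw [F.top (i + 1) h.ge]
    exact F.face_subset i

theorem exists_mem_intrinsicInterior_inter_mem_nhdsWithin (hP : Convex ℝ P) (hPd : sdim P = k)
    {C D : Set (Euc d)} (hC : Convex ℝ C) (hD : Convex ℝ D)
    (hCF : ∀ i ≤ k, (C ∩ intrinsicInterior ℝ (F.face i)).Nonempty)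
    (hDF : ∀ i ≤ k, (D ∩ intrinsicInterior ℝ (F.face i)).Nonempty) :
    ∀ i ≤ k, ∃ p ∈ intrinsicInterior ℝ (F.face i), C ∩ D ∈ 𝓝[affineSpan ℝ (F.face i)] p := by
  intro i
  induction i with
  | zero =>
    intro h0
    exact exists_mem_intrinsicInterior_inter_mem_nhdsWithin_of_finrank_eq_zero
      (F.sdim_face hPd h0) (hCF 0 h0) (hDF 0 h0)
  | succ i ih =>
    intro hi
    refine exists_mem_intrinsicInterior_inter_mem_nhdsWithin_of_isExposed hC hD
      (F.convex_face hP _) (F.exposed i hi) (F.face_subset_face_succ hi) (F.face_subset _) ?_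
      (hCF _ hi) (hDF _ hi) (ih (Nat.le_of_succ_le hi))
    change sdim _ = sdim _ + 1
    rw [F.sdim_face hPd hi, F.sdim_face hPd (Nat.le_of_succ_le hi)]

end FullFlag

/-- The set of cones of a fan meeting the relative interiors of all faces of a full flag
is closed under pairwise intersection. -/
theorem stmt_9 {d k : ℕ} (Φ : Finset (Set (Euc d))) (hΦ : IsFan Φ)
    (P : Set (Euc d)) (hP : IsPolytope P) (hPd : sdim P = k) (F : FullFlag P k)
    (C D : Set (Euc d)) (hC : C ∈ Φ) (hD : D ∈ Φ)
    (h1 : ∀ i ≤ k, (C ∩ intrinsicInterior ℝ (F.face i)).Nonempty)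
    (h2 : ∀ i ≤ k, (D ∩ intrinsicInterior ℝ (F.face i)).Nonempty) :
    ∀ i ≤ k, ((C ∩ D) ∩ intrinsicInterior ℝ (F.face i)).Nonempty := by
  intro i hi
  obtain ⟨p, hpF, hp⟩ := F.exists_mem_intrinsicInterior_inter_mem_nhdsWithin hP.convex hPd
    (hΦ.1 C hC).convex (hΦ.1 D hD).convex h1 h2 i hi
  exact ⟨p, mem_of_mem_nhdsWithin (subset_affineSpan ℝ _ (intrinsicInterior_subset hpF)) hp, hpF⟩
end
end

section
/- A graph is a cograph if and only if it does not contain the path on 4 vertices (P_4) as an induced subgraph. -/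
/-!
Induced `P₄`s are carried along embeddings, survive complementation (`P₄` is self-complementary)
and cannot be split across a disjoint union, so cographs are `P₄`-free.

Conversely, a `P₄`-free graph `G` on at least two vertices cannot be connected with connected
complement. Fix `v` and pick a neighbour `a` of `v` adjacent to as many non-neighbours of `v` as
possible. Connectivity of `Gᶜ` gives a common non-neighbour `b₀` of `v` and `a`, connectivity of
`G` a neighbour `a'` of `v` adjacent to `b₀`, and `P₄`-freeness of `G` and `Gᶜ` forces `a'` to be
adjacent to every non-neighbour of `v` that `a` is adjacent to, contradicting the choice of `a`.
So `G` or `Gᶜ` is a disjoint union of two smaller induced subgraphs, and induction on the number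
of vertices concludes.
-/

/-- Cographs: single-vertex graphs, complements of cographs, disjoint unions of cographs,
up to isomorphism. -/
inductive IsCograph : {V : Type} → SimpleGraph V → Prop
  | single : IsCograph (⊥ : SimpleGraph Unit)
  | compl {V : Type} {G : SimpleGraph V} : IsCograph G → IsCograph Gᶜ
  | union {V W : Type} {G : SimpleGraph V} {H : SimpleGraph W} :
      IsCograph G → IsCograph H → IsCograph (G ⊕g H)
  | iso {V W : Type} {G : SimpleGraph V} {H : SimpleGraph W} (e : G ≃g H) :
      IsCograph G → IsCograph H

namespace SimpleGraph

variable {V W : Type*} {G : SimpleGraph V} {H : SimpleGraph W} {a b c d : V}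

structure IsInducedP4 (G : SimpleGraph V) (a b c d : V) : Prop where
  adj_ab : G.Adj a b
  adj_bc : G.Adj b c
  adj_cd : G.Adj c d
  not_adj_ac : ¬G.Adj a c
  not_adj_ad : ¬G.Adj a d
  not_adj_bd : ¬G.Adj b d
  ne_ac : a ≠ c
  ne_ad : a ≠ d
  ne_bd : b ≠ d

def HasInducedP4 (G : SimpleGraph V) : Prop :=
  ∃ a b c d, G.IsInducedP4 a b c d

theorem IsInducedP4.map (f : G ↪g H) (h : G.IsInducedP4 a b c d) :
    H.IsInducedP4 (f a) (f b) (f c) (f d) :=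
  ⟨f.map_adj_iff.2 h.adj_ab, f.map_adj_iff.2 h.adj_bc, f.map_adj_iff.2 h.adj_cd,
    mt f.map_adj_iff.1 h.not_adj_ac, mt f.map_adj_iff.1 h.not_adj_ad,
    mt f.map_adj_iff.1 h.not_adj_bd, f.injective.ne h.ne_ac, f.injective.ne h.ne_ad,
    f.injective.ne h.ne_bd⟩

theorem HasInducedP4.map (f : G ↪g H) : G.HasInducedP4 → H.HasInducedP4 :=
  fun ⟨_, _, _, _, h⟩ => ⟨_, _, _, _, h.map f⟩

/-- `P₄` is self-complementary. -/
theorem IsInducedP4.of_compl (h : Gᶜ.IsInducedP4 a b c d) : G.IsInducedP4 b d a c := by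
  have adj_compl {x y : V} (hne : x ≠ y) (hxy : ¬Gᶜ.Adj x y) : G.Adj x y := by
    simpa [compl_adj, hne] using hxy
  have ⟨hab, hbc, hcd, hac, had, hbd, hne_ac, hne_ad, hne_bd⟩ := h
  rw [compl_adj] at hab hbc hcd
  exact ⟨adj_compl hne_bd hbd, (adj_compl hne_ad had).symm, adj_compl hne_ac hac,
    fun h => hab.2 h.symm, hbc.2, fun h => hcd.2 h.symm, hab.1.symm, hbc.1, hcd.1.symm⟩

theorem hasInducedP4_compl : Gᶜ.HasInducedP4 ↔ G.HasInducedP4 :=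
  ⟨fun ⟨_, _, _, _, h⟩ => ⟨_, _, _, _, h.of_compl⟩,
    fun ⟨_, _, _, _, h⟩ => ⟨_, _, _, _, (compl_compl G ▸ h).of_compl⟩⟩

theorem HasInducedP4.sum : (G ⊕g H).HasInducedP4 → G.HasInducedP4 ∨ H.HasInducedP4 := by
  rintro ⟨a, b, c, d, ⟨hab, hbc, hcd, hac, had, hbd, hne_ac, hne_ad, hne_bd⟩⟩
  rcases a with a | a <;> rcases b with b | b <;> rcases c with c | c <;> rcases d with d | d <;>
    simp_all
  · exact .inl ⟨a, b, c, d, hab, hbc, hcd, hac, had, hbd, hne_ac, hne_ad, hne_bd⟩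
  · exact .inr ⟨a, b, c, d, hab, hbc, hcd, hac, had, hbd, hne_ac, hne_ad, hne_bd⟩

theorem hasInducedP4_iff_nonempty_embedding :
    G.HasInducedP4 ↔ Nonempty (pathGraph 4 ↪g G) := by
  constructor
  · rintro ⟨a, b, c, d, ⟨hab, hbc, hcd, hac, had, hbd, hne_ac, hne_ad, hne_bd⟩⟩
    have := hab.ne; have := hbc.ne; have := hcd.ne
    have := hab.symm; have := hbc.symm; have := hcd.symm
    have := mt G.adj_symm hac; have := mt G.adj_symm had; have := mt G.adj_symm hbd
    refine ⟨⟨⟨![a, b, c, d], fun i j hij => ?_⟩, fun {i j} => ?_⟩⟩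
    · fin_cases i <;> fin_cases j <;> simp_all
    · change G.Adj (![a, b, c, d] i) (![a, b, c, d] j) ↔ _
      fin_cases i <;> fin_cases j <;> simp_all [pathGraph_adj]
  · rintro ⟨f⟩
    have adj (i j : Fin 4) (h : (pathGraph 4).Adj i j) := f.map_adj_iff.2 h
    have not_adj (i j : Fin 4) (h : ¬(pathGraph 4).Adj i j) := mt f.map_adj_iff.1 h
    exact ⟨f 0, f 1, f 2, f 3, adj 0 1 (by simp [pathGraph_adj]),
      adj 1 2 (by simp [pathGraph_adj]), adj 2 3 (by simp [pathGraph_adj]),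
      not_adj 0 2 (by simp [pathGraph_adj]), not_adj 0 3 (by simp [pathGraph_adj]),
      not_adj 1 3 (by simp [pathGraph_adj]),
      f.injective.ne (by decide), f.injective.ne (by decide), f.injective.ne (by decide)⟩

theorem exists_adj_adj_of_reachable (hG : ¬G.HasInducedP4) {u v : V} (huv : G.Reachable u v)
    (hne : u ≠ v) (hnadj : ¬G.Adj u v) : ∃ w, G.Adj u w ∧ G.Adj w v := by
  obtain ⟨p⟩ := huv
  induction p with
  | nil => exact absurd rfl hne
  | @cons u x v hux q ih =>
    obtain rfl | hxv := eq_or_ne x v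
    · exact absurd hux hnadj
    by_cases hxv' : G.Adj x v
    · exact ⟨x, hux, hxv'⟩
    obtain ⟨w, hxw, hwv⟩ := ih hxv hxv'
    by_cases huw : G.Adj u w
    · exact ⟨w, huw, hwv⟩
    exact absurd
      ⟨u, x, w, v, hux, hxw, hwv, huw, hnadj, hxv', fun h => hnadj (h ▸ hwv), hne, hxv⟩ hG

/-- Otherwise `b - a' - v - a` is an induced `P₄`. -/
theorem adj_of_separated_by_nonneighbor (hG : ¬G.HasInducedP4) {v a a' b : V} (hva : G.Adj v a)
    (hva' : G.Adj v a') (hvb : Gᶜ.Adj v b) (hab : Gᶜ.Adj a b) (ha'b : G.Adj a' b) :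
    G.Adj a a' := by
  rw [compl_adj] at hvb hab
  by_contra haa'
  exact hG ⟨b, a', v, a, ha'b.symm, hva'.symm, hva, fun h => hvb.2 h.symm,
    fun h => hab.2 h.symm, fun h => haa' h.symm, hvb.1.symm, hab.1.symm, fun h => hab.2 (h ▸ ha'b)⟩

theorem neighborSet_inter_ssubset (hG : ¬G.HasInducedP4) (hGc : ¬Gᶜ.HasInducedP4)
    {v a a' b₀ : V} (hva : G.Adj v a) (hva' : G.Adj v a') (hvb₀ : Gᶜ.Adj v b₀)
    (hab₀ : Gᶜ.Adj a b₀) (ha'b₀ : G.Adj a' b₀) :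
    G.neighborSet a ∩ Gᶜ.neighborSet v ⊂ G.neighborSet a' ∩ Gᶜ.neighborSet v := by
  have haa' := adj_of_separated_by_nonneighbor hG hva hva' hvb₀ hab₀ ha'b₀
  refine ⟨fun b ⟨(hab : G.Adj a b), (hvb : Gᶜ.Adj v b)⟩ => ⟨?_, hvb⟩,
    fun h => ((G.compl_adj a b₀).1 hab₀).2 (h ⟨ha'b₀, hvb₀⟩).1⟩
  by_contra (ha'b : ¬G.Adj a' b)
  -- then `b ≁ b₀` by the previous lemma in `Gᶜ`, and `b₀ - a' - a - b` is an induced `P₄`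
  have hbb₀ : Gᶜ.Adj b b₀ := by
    refine adj_of_separated_by_nonneighbor hGc hvb hvb₀ (b := a) ?_ ?_ hab₀.symm
    · rw [compl_compl]; exact hva
    · rw [compl_compl]; exact hab.symm
  rw [compl_adj] at hab₀ hbb₀ hvb
  exact hG ⟨b₀, a', a, b, ha'b₀.symm, haa'.symm, hab, fun h => hab₀.2 h.symm,
    fun h => hbb₀.2 h.symm, ha'b, hab₀.1.symm, hbb₀.1.symm, fun h => hvb.2 (h ▸ hva')⟩

theorem hasInducedP4_of_connected_of_compl_connected [Finite V] [Nontrivial V]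
    (hG : G.Connected) (hGc : Gᶜ.Connected) : G.HasInducedP4 := by
  by_contra hP4
  have hP4c : ¬Gᶜ.HasInducedP4 := hasInducedP4_compl.not.2 hP4
  obtain ⟨v⟩ : Nonempty V := inferInstance
  obtain ⟨a₀, (hva₀ : G.Adj v a₀), hmax⟩ := (G.neighborSet v).exists_max_image
    (fun a => (G.neighborSet a ∩ Gᶜ.neighborSet v).ncard) (Set.toFinite _)
    (hG.preconnected.exists_adj_of_nontrivial v)
  obtain ⟨b₀, hvb₀, hb₀a₀⟩ := exists_adj_adj_of_reachable hP4c (hGc.preconnected v a₀) hva₀.ne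
    (by simp [compl_adj, hva₀])
  obtain ⟨a', hva', ha'b₀⟩ := exists_adj_adj_of_reachable hP4 (hG.preconnected v b₀) hvb₀.1 hvb₀.2
  exact (hmax a' hva').not_gt <| Set.ncard_lt_ncard <|
    neighborSet_inter_ssubset hP4 hP4c hva₀ hva' hvb₀ hb₀a₀.symm ha'b₀

theorem exists_iso_sum_induce_of_not_connected [Nonempty V] (hG : ¬G.Connected) :
    ∃ s : Set V, s.Nonempty ∧ sᶜ.Nonempty ∧ Nonempty (G.induce s ⊕g G.induce sᶜ ≃g G) := by
  classical
  obtain ⟨u, w, huw⟩ : ∃ u w, ¬G.Reachable u w := by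
    by_contra! h
    exact hG ⟨h⟩
  let s := {x | G.Reachable u x}
  have not_adj {x y : V} (hx : x ∈ s) (hy : y ∈ sᶜ) : ¬G.Adj x y :=
    fun h => hy (hx.trans h.reachable)
  refine ⟨s, ⟨u, .refl u⟩, ⟨w, huw⟩, ⟨⟨Equiv.Set.sumCompl s, ?_⟩⟩⟩
  rintro (⟨x, hx⟩ | ⟨x, hx⟩) (⟨y, hy⟩ | ⟨y, hy⟩)
  · simp
  · exact iff_of_false (not_adj hx hy) (by simp)
  · exact iff_of_false (fun h => not_adj hy hx h.symm) (by simp)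
  · simp

end SimpleGraph

open SimpleGraph

theorem IsCograph.not_hasInducedP4 {V : Type} {G : SimpleGraph V} (h : IsCograph G) :
    ¬G.HasInducedP4 := by
  induction h with
  | single => exact fun ⟨_, _, _, _, h⟩ => h.adj_ab
  | compl _ ih => exact ih ∘ hasInducedP4_compl.1
  | union _ _ ih₁ ih₂ => exact fun h => h.sum.elim ih₁ ih₂
  | iso e _ ih => exact ih ∘ HasInducedP4.map e.symm.toEmbedding

theorem IsCograph.of_compl {V : Type} {G : SimpleGraph V} (h : IsCograph Gᶜ) : IsCograph G :=
  compl_compl G ▸ h.compl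

theorem IsCograph.of_subsingleton {V : Type} [Nonempty V] [Subsingleton V] (G : SimpleGraph V) :
    IsCograph G :=
  have : Unique V := uniqueOfSubsingleton (Classical.arbitrary V)
  .iso ⟨Equiv.ofUnique Unit V, fun {x y} => by simp [Subsingleton.elim x y]⟩ .single

theorem IsCograph.of_not_connected {V : Type} [Nonempty V] {G : SimpleGraph V}
    (hG : ¬G.Connected)
    (h : ∀ s : Set V, s.Nonempty → sᶜ.Nonempty → IsCograph (G.induce s)) : IsCograph G :=
  have ⟨s, hs, hsc, ⟨e⟩⟩ := exists_iso_sum_induce_of_not_connected hG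
  .iso e (.union (h s hs hsc) (h sᶜ hsc (by rwa [compl_compl])))

theorem isCograph_of_not_hasInducedP4 {V : Type} [Finite V] [Nonempty V] {G : SimpleGraph V}
    (hG : ¬G.HasInducedP4) : IsCograph G := by
  induction hn : Nat.card V using Nat.strong_induction_on generalizing V with
  | _ n ih =>
  rcases subsingleton_or_nontrivial V with _ | _
  · exact .of_subsingleton G
  have induce_isCograph {K : SimpleGraph V} (hK : ¬K.HasInducedP4) (s : Set V) (hs : s.Nonempty)
      (hsc : sᶜ.Nonempty) : IsCograph (K.induce s) :=
    have : Nonempty s := hs.to_subtype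
    ih _ (hn ▸ Finite.card_subtype_lt hsc.some_mem) (hK ∘ .map (Embedding.induce s)) rfl
  by_cases hc : G.Connected
  · have hcc : ¬Gᶜ.Connected := fun hcc => hG (hasInducedP4_of_connected_of_compl_connected hc hcc)
    exact .of_compl (.of_not_connected hcc (induce_isCograph (hasInducedP4_compl.not.2 hG)))
  · exact .of_not_connected hc (induce_isCograph hG)

/-- A (finite, nonempty) graph is a cograph if and only if it does not contain `P_4`
as an induced subgraph. -/
theorem stmt_17 {V : Type} [Fintype V] [Nonempty V] (G : SimpleGraph V) :
    IsCograph G ↔ IsEmpty (SimpleGraph.pathGraph 4 ↪g G) := by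
  rw [← not_nonempty_iff, ← hasInducedP4_iff_nonempty_embedding]
  exact ⟨IsCograph.not_hasInducedP4, isCograph_of_not_hasInducedP4⟩
end
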